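/- Under the same assumptions, with a = (w(k₁), w(k₂), ..., w(k_r), 1)ᵀ the activity vector and v₁ defined by the recursion v_{1,i} = (f(k_i) + ∑_{j<i} w(k_j)g(k_i − k_j)v_{1,j})/(λ₁ + w(k_i)(1 − g(0))) and v_{1,r+1} = 1 − ∑_{j=1}^r w(k_j)v_{1,j}, the inner product a · v₁ = 1 holds. Moreover, if λ₁ is a simple eigenvalue of A, then v₁ is the unique right eigenvector of A for λ₁ normalized by a · v₁ = 1. -/

import Mathlib

open Finset Matrix

/-!
The first `r` rows of `A v₁ = λ₁ v₁` are the recursion defining `v₁`, once `a · v₁ = 1` is used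
to collect the terms `f(k_i) w(k_j) v₁_j`. For the last row, the entry in column `j` is
`w(k_j) ∑_{m > k_r} w(m) (f(m) + g(m - k_j))`; over all `m` this sum is `λ₁ + w(k_j)` (shift
`m ↦ m + k_j`, `w` affine, (G1)), and by (F) and (G2) its part with `m ≤ k_r` only sees the sites
`k_i`. Summing the recursion against the weights `w(k_i)` then gives the last row.

For uniqueness: a second eigenvector `u ≠ v₁` with `a · u = 1` would make `v₁, u - v₁` a free
pair in the eigenspace, whereas the geometric multiplicity is bounded by the algebraic one.
-/

namespace Matrix

variable {K n : Type*} [Field K] [Fintype n] [DecidableEq n]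

theorem eq_of_mulVec_eq_smul_of_rootMultiplicity_le_one {A : Matrix n n K} {μ : K}
    (hμ : A.charpoly.rootMultiplicity μ ≤ 1) {a u v : n → K}
    (hu : A *ᵥ u = μ • u) (hv : A *ᵥ v = μ • v) (hau : a ⬝ᵥ u = 1) (hav : a ⬝ᵥ v = 1) :
    u = v := by
  by_contra hne
  have hind : LinearIndependent K ![v, u - v] := by
    refine LinearIndependent.pair_iff.2 fun s t hst => ?_
    have hs : s = 0 := by
      simpa [dotProduct_add, dotProduct_smul, dotProduct_sub, hau, hav] using
        congrArg (a ⬝ᵥ ·) hst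
    subst hs
    simpa [sub_ne_zero.2 hne] using hst
  have hspan : Submodule.span K (Set.range ![v, u - v]) ≤ Module.End.eigenspace (toLin' A) μ := by
    refine Submodule.span_le.2 ?_
    rintro _ ⟨i, rfl⟩
    fin_cases i <;> simp [hu, hv, mulVec_sub, smul_sub]
  have := ((finrank_span_eq_card hind).symm.trans_le
    (Submodule.finrank_mono hspan)).trans (LinearMap.finrank_eigenspace_le _ μ)
  rw [charpoly_toLin', Fintype.card_fin] at this
  omega

end Matrix

theorem sum_Ico_one_mul_sub_eq {R : Type*} [CommSemiring R] {φ g : ℕ → R} {B M c : ℕ}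
    (hg0 : g 0 = 0) (hgM : ∀ m, M ≤ m → g m = 0) (hc : c + M ≤ B) :
    ∑ m ∈ Ico 1 B, φ m * g (m - c) = ∑ m ∈ Ico 1 B, φ (m + c) * g m := by
  have hhigh : ∑ m ∈ Ico 1 (B - c), φ (m + c) * g m = ∑ m ∈ Ico 1 B, φ (m + c) * g m :=
    sum_subset (Ico_subset_Ico_right (by omega)) fun m hm hm' => by
      rw [hgM m (by simp only [mem_Ico] at hm hm'; omega), mul_zero]
  have hlow : ∑ m ∈ Ico (1 + c) B, φ m * g (m - c) = ∑ m ∈ Ico 1 B, φ m * g (m - c) :=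
    sum_subset (Ico_subset_Ico_left (by omega)) fun m hm hm' => by
      rw [show m - c = 0 by simp only [mem_Ico] at hm hm'; omega, hg0, mul_zero]
  have hshift : ∑ m ∈ Ico 1 (B - c), φ (m + c) * g (m + c - c)
      = ∑ m ∈ Ico (1 + c) B, φ m * g (m - c) := by
    rw [sum_Ico_add' (fun m => φ m * g (m - c)), Nat.sub_add_cancel (by omega)]
  simp only [Nat.add_sub_cancel] at hshift
  rw [← hhigh, ← hlow, hshift]

theorem sum_Ico_one_mul_add_sub_eq {χ ρ : ℝ} {w f g : ℕ → ℝ} {B M c : ℕ}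
    (hw : ∀ n, w n = χ * n + ρ) (hg0 : g 0 = 0) (hgM : ∀ m, M ≤ m → g m = 0)
    (hg1 : ∑ m ∈ Ico 1 B, g m = 1) (hc : c + M ≤ B) :
    ∑ m ∈ Ico 1 B, w m * (f m + g (m - c)) = ∑ m ∈ Ico 1 B, (w m * f m + χ * m * g m) + w c := by
  calc ∑ m ∈ Ico 1 B, w m * (f m + g (m - c))
      = ∑ m ∈ Ico 1 B, w m * f m + ∑ m ∈ Ico 1 B, w (m + c) * g m := by
        rw [← sum_Ico_one_mul_sub_eq hg0 hgM hc, ← sum_add_distrib]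
        simp only [mul_add]
    _ = ∑ m ∈ Ico 1 B, (w m * f m + χ * m * g m) + w c * ∑ m ∈ Ico 1 B, g m := by
        rw [mul_sum, ← sum_add_distrib, ← sum_add_distrib]
        refine sum_congr rfl fun m _ => ?_
        rw [hw, hw, hw]
        push_cast
        ring
    _ = _ := by rw [hg1, mul_one]

theorem sum_Ico_one_succ_eq_sum_comp {R : Type*} [AddCommMonoid R] {r kr : ℕ} {k : Fin r → ℕ}
    (hk : Function.Injective k) (hk1 : ∀ i, 1 ≤ k i) (hkle : ∀ i, k i ≤ kr) {h : ℕ → R}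
    (hh : ∀ m, m ≤ kr → (∀ i, m ≠ k i) → h m = 0) :
    ∑ m ∈ Ico 1 (kr + 1), h m = ∑ i, h (k i) := by
  refine (sum_of_injOn k hk.injOn (fun i _ => ?_) (fun m hm hm' => ?_) fun _ _ => rfl).symm
  · simp only [coe_Ico, Set.mem_Ico]
    exact ⟨hk1 i, Nat.lt_succ_of_le (hkle i)⟩
  · simp only [mem_Ico, coe_univ, Set.image_univ, Set.mem_range, not_exists] at hm hm'
    exact hh m (Nat.le_of_lt_succ hm.2) fun i hi => hm' i hi.symm

section IntensityMatrix

/- The matrix (7) and the activity vector `a`, with 0-based indices: row/column `i < r` is the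
site `k_{i+1}`, and `kr = k_r`. -/
def intensityMatrix (r : ℕ) (χ : ℝ) (w f g : ℕ → ℝ) (k : Fin r → ℕ) (kr B : ℕ) :
    Matrix (Fin (r + 1)) (Fin (r + 1)) ℝ :=
  Matrix.of fun i j =>
    if hi : (i : ℕ) < r then
      if hj : (j : ℕ) < r then
        if (i : ℕ) < (j : ℕ) then w (k ⟨j, hj⟩) * f (k ⟨i, hi⟩)
        else if (i : ℕ) = (j : ℕ) then
          w (k ⟨i, hi⟩) * (f (k ⟨i, hi⟩) + g 0 - 1)
        else w (k ⟨j, hj⟩) * (f (k ⟨i, hi⟩) + g (k ⟨i, hi⟩ - k ⟨j, hj⟩))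
      else f (k ⟨i, hi⟩)
    else
      if hj : (j : ℕ) < r then
        w (k ⟨j, hj⟩) *
          ∑ m ∈ Ico (kr + 1) B, w m * (f m + g (m - k ⟨j, hj⟩))
      else
        ∑ m ∈ Ico (kr + 1) B, w m * f m
          + ∑ m ∈ Ico 1 B, χ * m * g m

variable {r : ℕ}

def activity (k : Fin r → ℕ) (w : ℕ → ℝ) : Fin (r + 1) → ℝ :=
  fun j => if hj : (j : ℕ) < r then w (k ⟨j, hj⟩) else 1

variable {χ ρ lam : ℝ} {w f g : ℕ → ℝ} {k : Fin r → ℕ} {kr B M : ℕ}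

theorem activity_dotProduct (x : Fin (r + 1) → ℝ) :
    activity k w ⬝ᵥ x = ∑ j, w (k j) * x j.castSucc + x (Fin.last r) := by
  simp [dotProduct, Fin.sum_univ_castSucc, activity]

theorem intensityMatrix_castSucc_castSucc (hg0 : g 0 = 0) (i j : Fin r) :
    intensityMatrix r χ w f g k kr B i.castSucc j.castSucc =
      f (k i) * w (k j) + (if j < i then w (k j) * g (k i - k j) else 0)
        - if j = i then w (k i) else 0 := by
  simp only [intensityMatrix, of_apply, Fin.val_castSucc, i.isLt, j.isLt, dif_pos, Fin.eta]
  rcases lt_trichotomy i j with h | rfl | h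
  · simp [h, h.not_gt, h.ne']
    ring
  · simp [hg0]
    ring
  · simp [h, h.not_gt, h.ne, Fin.val_ne_of_ne h.ne']
    ring

theorem intensityMatrix_castSucc_last (i : Fin r) :
    intensityMatrix r χ w f g k kr B i.castSucc (Fin.last r) = f (k i) := by
  simp [intensityMatrix]

theorem intensityMatrix_mulVec_castSucc (hg0 : g 0 = 0) (x : Fin (r + 1) → ℝ) (i : Fin r) :
    (intensityMatrix r χ w f g k kr B *ᵥ x) i.castSucc =
      f (k i) * (activity k w ⬝ᵥ x) + ∑ j with j < i, w (k j) * g (k i - k j) * x j.castSucc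
        - w (k i) * x i.castSucc := by
  rw [activity_dotProduct]
  simp only [mulVec, dotProduct, Fin.sum_univ_castSucc, intensityMatrix_castSucc_castSucc hg0,
    intensityMatrix_castSucc_last, sub_mul, add_mul, sum_sub_distrib,
    sum_add_distrib, ite_mul, zero_mul, sum_ite_eq', mem_univ, if_true, ← sum_filter, mul_add,
    mul_sum, mul_assoc]
  ring

theorem intensityMatrix_last_castSucc (hk : StrictMono k) (hk1 : ∀ i, 1 ≤ k i)
    (hkle : ∀ i, k i ≤ kr) (hw : ∀ n, w n = χ * n + ρ) (hg0 : g 0 = 0)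
    (hgM : ∀ m, M ≤ m → g m = 0) (hB : M + kr + 1 ≤ B)
    (hF : ∀ m, m ≤ kr → (∀ i, m ≠ k i) → f m = 0) (hG1 : ∑ m ∈ range B, g m = 1)
    (hG2 : ∀ m, m ≤ kr → (∀ i, m ≠ k i) → ∀ j, g (m - k j) = 0)
    (hlam : lam = ∑ m ∈ Ico 1 B, (w m * f m + χ * m * g m)) (j : Fin r) :
    intensityMatrix r χ w f g k kr B (Fin.last r) j.castSucc =
      w (k j) * (lam - ∑ i, w (k i) * f (k i) + w (k j)
        - ∑ i with j < i, w (k i) * g (k i - k j)) := by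
  have hsites : ∑ m ∈ Ico 1 (kr + 1), w m * (f m + g (m - k j))
      = ∑ i, w (k i) * f (k i) + ∑ i with j < i, w (k i) * g (k i - k j) := by
    rw [sum_Ico_one_succ_eq_sum_comp hk.injective hk1 hkle fun m hm hmk => by
      rw [hF m hm hmk, hG2 m hm hmk j, add_zero, mul_zero], sum_filter, ← sum_add_distrib]
    refine sum_congr rfl fun i _ => ?_
    split_ifs with hji
    · ring
    · rw [Nat.sub_eq_zero_of_le (hk.monotone (not_lt.1 hji)), hg0]
      ring
  have hG1' : ∑ m ∈ Ico 1 B, g m = 1 := by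
    rwa [sum_range_eq_add_Ico g (by omega), hg0, zero_add] at hG1
  have htotal := sum_Ico_one_mul_add_sub_eq (f := f) hw hg0 hgM hG1'
    (show k j + M ≤ B by have := hkle j; omega)
  have hsplit := sum_Ico_consecutive (fun m => w m * (f m + g (m - k j)))
    (show 1 ≤ kr + 1 by omega) (show kr + 1 ≤ B by omega)
  simp only [intensityMatrix, of_apply, Fin.val_last, Fin.val_castSucc, lt_irrefl, j.isLt,
    dif_pos, dif_neg, not_false_eq_true, Fin.eta]
  rw [hlam]
  linear_combination w (k j) * (hsplit + htotal - hsites)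

theorem intensityMatrix_last_last (hk : StrictMono k) (hk1 : ∀ i, 1 ≤ k i)
    (hkle : ∀ i, k i ≤ kr) (hB : kr + 1 ≤ B) (hF : ∀ m, m ≤ kr → (∀ i, m ≠ k i) → f m = 0)
    (hlam : lam = ∑ m ∈ Ico 1 B, (w m * f m + χ * m * g m)) :
    intensityMatrix r χ w f g k kr B (Fin.last r) (Fin.last r) =
      lam - ∑ i, w (k i) * f (k i) := by
  have hsites := sum_Ico_one_succ_eq_sum_comp (h := fun m => w m * f m) hk.injective hk1 hkle
    fun m hm hmk => by rw [hF m hm hmk, mul_zero]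
  have hsplit := sum_Ico_consecutive (fun m => w m * f m) (show 1 ≤ kr + 1 by omega) hB
  simp only [intensityMatrix, of_apply, Fin.val_last, lt_irrefl, dif_neg, not_false_eq_true]
  rw [hlam, sum_add_distrib]
  linear_combination hsplit - hsites

theorem intensityMatrix_mulVec_last (hk : StrictMono k) (hk1 : ∀ i, 1 ≤ k i)
    (hkle : ∀ i, k i ≤ kr) (hw : ∀ n, w n = χ * n + ρ) (hg0 : g 0 = 0)
    (hgM : ∀ m, M ≤ m → g m = 0) (hB : M + kr + 1 ≤ B)
    (hF : ∀ m, m ≤ kr → (∀ i, m ≠ k i) → f m = 0) (hG1 : ∑ m ∈ range B, g m = 1)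
    (hG2 : ∀ m, m ≤ kr → (∀ i, m ≠ k i) → ∀ j, g (m - k j) = 0)
    (hlam : lam = ∑ m ∈ Ico 1 B, (w m * f m + χ * m * g m)) (x : Fin (r + 1) → ℝ) :
    (intensityMatrix r χ w f g k kr B *ᵥ x) (Fin.last r) =
      (lam - ∑ i, w (k i) * f (k i)) * (activity k w ⬝ᵥ x)
        + ∑ i, w (k i) * (w (k i) * x i.castSucc
          - ∑ j with j < i, w (k j) * g (k i - k j) * x j.castSucc) := by
  have hswap : ∑ j, w (k j) * (∑ i with j < i, w (k i) * g (k i - k j)) * x j.castSucc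
      = ∑ i, w (k i) * ∑ j with j < i, w (k j) * g (k i - k j) * x j.castSucc := by
    simp only [mul_sum, sum_mul]
    refine sum_comm' (by simp) |>.trans (sum_congr rfl fun i _ => sum_congr rfl fun j _ => ?_)
    ring
  rw [activity_dotProduct]
  simp only [mulVec, dotProduct, Fin.sum_univ_castSucc,
    intensityMatrix_last_castSucc hk hk1 hkle hw hg0 hgM hB hF hG1 hG2 hlam,
    intensityMatrix_last_last hk hk1 hkle (by omega) hF hlam]
  have hentry : ∀ j, w (k j) * (lam - ∑ i, w (k i) * f (k i) + w (k j)
        - ∑ i with j < i, w (k i) * g (k i - k j)) * x j.castSucc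
      = (lam - ∑ i, w (k i) * f (k i)) * (w (k j) * x j.castSucc)
        + (w (k j) * (w (k j) * x j.castSucc)
          - w (k j) * (∑ i with j < i, w (k i) * g (k i - k j)) * x j.castSucc) :=
    fun j => by ring
  rw [sum_congr rfl fun j _ => hentry j, sum_add_distrib, sum_sub_distrib, ← mul_sum, hswap]
  simp only [mul_sub, sum_sub_distrib]
  ring

theorem intensityMatrix_mulVec_eq_smul (hk : StrictMono k) (hk1 : ∀ i, 1 ≤ k i)
    (hkle : ∀ i, k i ≤ kr) (hw : ∀ n, w n = χ * n + ρ) (hg0 : g 0 = 0)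
    (hgM : ∀ m, M ≤ m → g m = 0) (hB : M + kr + 1 ≤ B)
    (hF : ∀ m, m ≤ kr → (∀ i, m ≠ k i) → f m = 0) (hG1 : ∑ m ∈ range B, g m = 1)
    (hG2 : ∀ m, m ≤ kr → (∀ i, m ≠ k i) → ∀ j, g (m - k j) = 0)
    (hlam : lam = ∑ m ∈ Ico 1 B, (w m * f m + χ * m * g m)) {v : Fin (r + 1) → ℝ}
    (hrec : ∀ i, (lam + w (k i)) * v i.castSucc
      = f (k i) + ∑ j with j < i, w (k j) * g (k i - k j) * v j.castSucc)
    (hav : activity k w ⬝ᵥ v = 1) :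
    intensityMatrix r χ w f g k kr B *ᵥ v = lam • v := by
  ext i
  induction i using Fin.lastCases with
  | cast i =>
    rw [intensityMatrix_mulVec_castSucc hg0, hav, Pi.smul_apply, smul_eq_mul]
    linear_combination -hrec i
  | last =>
    have hlast : v (Fin.last r) = 1 - ∑ i, w (k i) * v i.castSucc := by
      rw [activity_dotProduct] at hav
      linear_combination hav
    have hrow : ∀ i, w (k i) * (w (k i) * v i.castSucc
        - ∑ j with j < i, w (k j) * g (k i - k j) * v j.castSucc)
        = w (k i) * f (k i) - lam * (w (k i) * v i.castSucc) :=
      fun i => by linear_combination w (k i) * hrec i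
    rw [intensityMatrix_mulVec_last hk hk1 hkle hw hg0 hgM hB hF hG1 hG2 hlam, hav,
      sum_congr rfl fun i _ => hrow i, sum_sub_distrib, ← mul_sum, Pi.smul_apply, smul_eq_mul,
      hlast]
    ring

end IntensityMatrix

/-- The eigenvector `v₁` satisfies the normalization `a · v₁ = 1` with the
activity vector `a = (w(k₁),…,w(k_r),1)`, and if `λ₁` is a simple eigenvalue of
`A` then `v₁` is the unique right eigenvector of `A` for `λ₁` with `a · v₁ = 1`. -/
theorem stmt_2
    (r : ℕ) (hr : 0 < r)
    (χ ρ : ℝ) (f g : ℕ → ℝ)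
    (k : Fin r → ℕ) (hk1 : ∀ i, 1 ≤ k i) (hkmono : StrictMono k)
    (w : ℕ → ℝ) (hw : ∀ n, w n = χ * n + ρ)
    (hg0 : g 0 = 0)
    (M : ℕ) (hgM : ∀ m, M ≤ m → g m = 0)
    (kr : ℕ) (hkr : kr = k ⟨r - 1, by omega⟩)
    (B : ℕ) (hB : B = M + kr + 1)
    -- assumption (F)
    (hF : ∀ m, m ≤ kr → (∀ i : Fin r, m ≠ k i) → f m = 0)
    -- assumption (G1)
    (hG1 : ∑ m ∈ Finset.range B, g m = 1)
    -- assumption (G2)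
    (hG2 : ∀ m, m ≤ kr → (∀ i : Fin r, m ≠ k i) → ∀ j : Fin r, g (m - k j) = 0)
    (lam1 : ℝ)
    (hlam1 : lam1 = ∑ m ∈ Finset.Ico 1 B, (w m * f m + χ * m * g m))
    (A : Matrix (Fin (r + 1)) (Fin (r + 1)) ℝ)
    (hA : ∀ i j : Fin (r + 1),
      A i j =
        if hi : (i : ℕ) < r then
          if hj : (j : ℕ) < r then
            if (i : ℕ) < (j : ℕ) then w (k ⟨j, hj⟩) * f (k ⟨i, hi⟩)
            else if (i : ℕ) = (j : ℕ) then
              w (k ⟨i, hi⟩) * (f (k ⟨i, hi⟩) + g 0 - 1)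
            else w (k ⟨j, hj⟩) * (f (k ⟨i, hi⟩) + g (k ⟨i, hi⟩ - k ⟨j, hj⟩))
          else f (k ⟨i, hi⟩)
        else
          if hj : (j : ℕ) < r then
            w (k ⟨j, hj⟩) *
              ∑ m ∈ Finset.Ico (kr + 1) B, w m * (f m + g (m - k ⟨j, hj⟩))
          else
            ∑ m ∈ Finset.Ico (kr + 1) B, w m * f m
              + ∑ m ∈ Finset.Ico 1 B, χ * m * g m)
    (v : Fin (r + 1) → ℝ)
    (hvdenom : ∀ i : Fin r, lam1 + w (k i) * (1 - g 0) ≠ 0)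
    (hv : ∀ i : Fin r,
      v i.castSucc =
        (f (k i) + ∑ j ∈ Finset.univ.filter (fun j : Fin r => j < i),
            w (k j) * g (k i - k j) * v j.castSucc)
          / (lam1 + w (k i) * (1 - g 0)))
    (hvlast : v (Fin.last r) = 1 - ∑ j : Fin r, w (k j) * v j.castSucc)
    (a : Fin (r + 1) → ℝ)
    (ha : ∀ j : Fin (r + 1), a j = if hj : (j : ℕ) < r then w (k ⟨j, hj⟩) else 1) :
    (∑ j : Fin (r + 1), a j * v j = 1) ∧
    (Polynomial.rootMultiplicity lam1 A.charpoly = 1 →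
      ∀ u : Fin (r + 1) → ℝ, A.mulVec u = lam1 • u →
        (∑ j : Fin (r + 1), a j * u j = 1) → u = v) := by
  have hkle : ∀ i, k i ≤ kr := fun i => hkr ▸ hkmono.monotone (Nat.le_sub_one_of_lt i.isLt)
  have hrec : ∀ i, (lam1 + w (k i)) * v i.castSucc
      = f (k i) + ∑ j with j < i, w (k j) * g (k i - k j) * v j.castSucc := fun i => by
    have hden := hvdenom i
    rw [hg0, sub_zero, mul_one] at hden
    rw [hv i, hg0, sub_zero, mul_one, mul_div_cancel₀ _ hden]
  obtain rfl : A = intensityMatrix r χ w f g k kr B := Matrix.ext hA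
  obtain rfl : a = activity k w := funext ha
  have hav : activity k w ⬝ᵥ v = 1 := by
    rw [activity_dotProduct, hvlast]
    ring
  have hAv :=
    intensityMatrix_mulVec_eq_smul hkmono hk1 hkle hw hg0 hgM hB.ge hF hG1 hG2 hlam1 hrec hav
  exact ⟨hav, fun hsimple u hu hau =>
    eq_of_mulVec_eq_smul_of_rootMultiplicity_le_one hsimple.le hu hAv hau hav⟩
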